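/- Let A be a finite totally ordered alphabet, z ∈ A, t¹, s¹ infinite words over A, and let a be a letter that is the minimum among the letters of A other than possibly z. Set t = Ψ_z(t¹) and s = Ψ_z(s¹). If min(t¹) = a·s¹, then min(t) = z·a·s when z < a, and min(t) = a·s when z ≥ a. -/

import Mathlib

/-- The prefix of length `k` of an infinite word `w : ℕ → A`. -/
def pref {A : Type*} (w : ℕ → A) (k : ℕ) : List A := (List.range k).map w

/-- `u` is a (finite) factor of the infinite word `w`. -/
def IsFactor {A : Type*} (w : ℕ → A) (u : List A) : Prop :=
  ∃ i : ℕ, u = (List.range u.length).map (fun j => w (i + j))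

/-- Prepend a letter to an infinite word. -/
def consW {A : Type*} (a : A) (s : ℕ → A) : ℕ → A := fun n => match n with
  | 0 => a
  | n + 1 => s n

/-- Concatenation of a finite word with an infinite word. -/
def catW {A : Type*} (u : List A) (w : ℕ → A) : ℕ → A := fun n =>
  if h : n < u.length then u.get ⟨n, h⟩ else w (n - u.length)

/-- `u` is the lexicographically smallest factor of `w` of length `k`,
w.r.t. the strict order `lt` on letters. -/
def IsMinFactor {A : Type*} (lt : A → A → Prop) (w : ℕ → A) (k : ℕ) (u : List A) : Prop :=
  IsFactor w u ∧ u.length = k ∧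
    ∀ v, IsFactor w v → v.length = k → u = v ∨ List.Lex lt u v

/-- `u` is the lexicographically greatest factor of `w` of length `k`. -/
def IsMaxFactor {A : Type*} (lt : A → A → Prop) (w : ℕ → A) (k : ℕ) (u : List A) : Prop :=
  IsFactor w u ∧ u.length = k ∧
    ∀ v, IsFactor w v → v.length = k → u = v ∨ List.Lex lt v u

/-- `m = min(w)`: every length-`k` prefix of `m` is the lexicographically
smallest factor of `w` of length `k`. -/
def IsMinWord {A : Type*} (lt : A → A → Prop) (w m : ℕ → A) : Prop :=
  ∀ k : ℕ, IsMinFactor lt w k (pref m k)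

/-- `m = max(w)`. -/
def IsMaxWord {A : Type*} (lt : A → A → Prop) (w m : ℕ → A) : Prop :=
  ∀ k : ℕ, IsMaxFactor lt w k (pref m k)

/-- The letter `z` is separating for `t`: every length-2 factor of `t` contains `z`. -/
def Separating {A : Type*} (z : A) (t : ℕ → A) : Prop :=
  ∀ u, IsFactor t u → u.length = 2 → z ∈ u

/-- The episturmian morphism `Ψ_z` on finite words: `z ↦ z`, `x ↦ zx` for `x ≠ z`. -/
def psiL {A : Type*} [DecidableEq A] (z : A) (u : List A) : List A :=
  u.flatMap (fun x => if x = z then [z] else [z, x])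

/-- `t = Ψ_z(y)` for infinite words: the `Ψ_z`-image of every prefix of `y`
is a prefix of `t`. -/
def PsiImage {A : Type*} [DecidableEq A] (z : A) (y t : ℕ → A) : Prop :=
  ∀ n : ℕ, psiL z (pref y n) = pref t (psiL z (pref y n)).length

/-- `u` is a left special factor of `w`. -/
def LeftSpecial {A : Type*} (w : ℕ → A) (u : List A) : Prop :=
  ∃ a b : A, a ≠ b ∧ IsFactor w (a :: u) ∧ IsFactor w (b :: u)

/-- `u` is a right special factor of `w`. -/
def RightSpecial {A : Type*} (w : ℕ → A) (u : List A) : Prop :=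
  ∃ a b : A, a ≠ b ∧ IsFactor w (u ++ [a]) ∧ IsFactor w (u ++ [b])

/-- `w` is a standard episturmian word: factors closed under reversal and
every left special factor is a prefix. -/
def StdEpisturmian {A : Type*} (w : ℕ → A) : Prop :=
  (∀ u, IsFactor w u → IsFactor w u.reverse) ∧
  (∀ u, LeftSpecial w u → u = pref w u.length)

/-- `w` is an `A`-strict standard episturmian word (standard Arnoux-Rauzy sequence):
standard episturmian and every prefix has every letter as a left extension. -/
def StrictStdEpisturmian {A : Type*} (w : ℕ → A) : Prop :=
  StdEpisturmian w ∧ ∀ (n : ℕ) (a : A), IsFactor w (a :: pref w n)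

/-- `w` is episturmian: factors closed under reversal and at most one right
special factor of each length. -/
def Episturmian {A : Type*} (w : ℕ → A) : Prop :=
  (∀ u, IsFactor w u → IsFactor w u.reverse) ∧
  (∀ u v, RightSpecial w u → RightSpecial w v → u.length = v.length → u = v)

/-- `w` is an `A`-strict episturmian word: it has the same set of factors as some
`A`-strict standard episturmian word. -/
def StrictEpisturmian {A : Type*} (w : ℕ → A) : Prop :=
  ∃ s : ℕ → A, StrictStdEpisturmian s ∧ ∀ u, IsFactor w u ↔ IsFactor s u

/-- `t` is fine: there is an infinite word `s` such that for every total order on the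
alphabet and every letter `a` minimal for that order, `min(t) = a·s`. -/
def Fine {A : Type*} (t : ℕ → A) : Prop :=
  ∃ s : ℕ → A, ∀ (l : LinearOrder A) (a : A), (∀ b, l.le a b) →
    IsMinWord l.lt t (consW a s)

set_option linter.unusedSectionVars false
namespace Stmt6Aux

variable {A : Type*}

def shiftW (w : ℕ → A) (i : ℕ) : ℕ → A := fun n => w (i + n)

@[simp] lemma pref_length (w : ℕ → A) (k : ℕ) : (pref w k).length = k := by
  simp [pref]

lemma pref_getElem (w : ℕ → A) {j k : ℕ} (h : j < (pref w k).length) :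
    (pref w k)[j] = w j := by
  simp [pref]

lemma pref_getD (w : ℕ → A) (d : A) {j k : ℕ} (h : j < k) :
    (pref w k).getD j d = w j := by
  rw [List.getD_eq_getElem _ _ (by simpa using h), pref_getElem]

lemma pref_eq_iff {x y : ℕ → A} {k : ℕ} :
    pref x k = pref y k ↔ ∀ j < k, x j = y j := by
  constructor
  · intro h j hj
    have := pref_getD x (x 0) hj
    rw [h, pref_getD y (x 0) hj] at this
    exact this.symm
  · intro h
    apply List.ext_getElem (by simp)
    intro j h1 h2
    rw [pref_getElem _ h1, pref_getElem _ h2]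
    exact h j (by simpa using h1)

lemma pref_add (w : ℕ → A) (m n : ℕ) :
    pref w (m + n) = pref w m ++ pref (shiftW w m) n := by
  simp [pref, List.range_add, List.map_map, shiftW, Function.comp]

lemma pref_one (y : ℕ → A) : pref y 1 = [y 0] := by simp [pref, List.range_succ]

lemma pref_succ (y : ℕ → A) (k : ℕ) :
    pref y (k + 1) = y 0 :: pref (shiftW y 1) k := by
  have := pref_add y 1 k
  rw [pref_one] at this
  rw [Nat.add_comm k 1, this]
  rfl

variable [DecidableEq A]

lemma psiL_append (z : A) (u v : List A) :
    psiL z (u ++ v) = psiL z u ++ psiL z v := List.flatMap_append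

lemma psiL_cons (z c : A) (u : List A) :
    psiL z (c :: u) = (if c = z then [z] else [z, c]) ++ psiL z u := by
  simp [psiL]

lemma le_psiL_length (z : A) (u : List A) : u.length ≤ (psiL z u).length := by
  induction u with
  | nil => simp [psiL]
  | cons c u ih =>
    rw [psiL_cons, List.length_append, List.length_cons]
    split <;> simp <;> omega

def psiW (z : A) (y : ℕ → A) : ℕ → A := fun n => (psiL z (pref y (n + 1))).getD n (y 0)

lemma psiL_pref_prefix (z : A) (y : ℕ → A) {m m' : ℕ} (h : m ≤ m') :
    ∃ v, psiL z (pref y m') = psiL z (pref y m) ++ v := by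
  obtain ⟨k, rfl⟩ := Nat.exists_eq_add_of_le h
  exact ⟨_, by rw [pref_add, psiL_append]⟩

lemma psiW_eq_getD (z : A) (y : ℕ → A) (d : A) {n m : ℕ}
    (h : n < (psiL z (pref y m)).length) :
    psiW z y n = (psiL z (pref y m)).getD n d := by
  have hn1 : n < (psiL z (pref y (n + 1))).length :=
    lt_of_lt_of_le (Nat.lt_succ_self n) (by simpa using le_psiL_length z (pref y (n + 1)))
  obtain ⟨v1, h1⟩ := psiL_pref_prefix z y (le_max_left (n + 1) m)
  obtain ⟨v2, h2⟩ := psiL_pref_prefix z y (le_max_right (n + 1) m)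
  have e1 : (psiL z (pref y (max (n + 1) m))).getD n d =
      (psiL z (pref y (n + 1))).getD n d := by
    rw [h1, List.getD_eq_getElem _ _ (by rw [List.length_append]; omega),
      List.getD_eq_getElem _ _ hn1, List.getElem_append_left hn1]
  have e2 : (psiL z (pref y (max (n + 1) m))).getD n d =
      (psiL z (pref y m)).getD n d := by
    rw [h2, List.getD_eq_getElem _ _ (by rw [List.length_append]; omega),
      List.getD_eq_getElem _ _ h, List.getElem_append_left h]
  rw [psiW, ← e2, e1, List.getD_eq_getElem _ _ hn1, List.getD_eq_getElem _ _ hn1]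


lemma lt_psiL_pref_length (z : A) (y : ℕ → A) {n m : ℕ} (h : n < m) :
    n < (psiL z (pref y m)).length := by
  have := le_psiL_length z (pref y m)
  rw [pref_length] at this
  omega

lemma psiW_zero (z : A) (y : ℕ → A) : psiW z y 0 = z := by
  have h0 : 0 < (psiL z (pref y 1)).length := lt_psiL_pref_length z y Nat.one_pos
  rw [psiW_eq_getD z y z h0, pref_one]
  by_cases h : y 0 = z <;> simp [psiL, h]

lemma psiL_pref_key (z : A) (y : ℕ → A) (m : ℕ) :
    psiL z (pref y (m + 1)) =
      (if y 0 = z then [z] else [z, y 0]) ++ psiL z (pref (shiftW y 1) m) := by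
  rw [pref_succ, psiL_cons]

lemma psiW_succ_of_eq (z : A) {y : ℕ → A} (h : y 0 = z) (n : ℕ) :
    psiW z y (n + 1) = psiW z (shiftW y 1) n := by
  have key := psiL_pref_key z y (n + 1)
  rw [if_pos h] at key
  have hlen : n < (psiL z (pref (shiftW y 1) (n + 1))).length :=
    lt_psiL_pref_length z _ (Nat.lt_succ_self n)
  have hlen2 : n + 1 < (psiL z (pref y (n + 2))).length := by
    rw [key]; simp only [List.singleton_append, List.length_cons]; omega
  rw [psiW_eq_getD z y z hlen2, key, List.singleton_append, List.getD_cons_succ,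
    ← psiW_eq_getD z (shiftW y 1) z hlen]

lemma psiW_one_of_ne (z : A) {y : ℕ → A} (h : y 0 ≠ z) : psiW z y 1 = y 0 := by
  have key := psiL_pref_key z y 1
  rw [if_neg h] at key
  have hlen2 : 1 < (psiL z (pref y 2)).length := by
    rw [key]; simp
  rw [psiW_eq_getD z y z hlen2, key]
  rfl

lemma psiW_two_of_ne (z : A) {y : ℕ → A} (h : y 0 ≠ z) (n : ℕ) :
    psiW z y (n + 2) = psiW z (shiftW y 1) n := by
  have key := psiL_pref_key z y (n + 2)
  rw [if_neg h] at key
  have hlen : n < (psiL z (pref (shiftW y 1) (n + 2))).length :=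
    lt_psiL_pref_length z _ (by omega)
  have hlen2 : n + 2 < (psiL z (pref y (n + 3))).length := by
    rw [key]; simp only [List.cons_append, List.nil_append, List.length_cons]; omega
  rw [psiW_eq_getD z y z hlen2, key, List.cons_append, List.cons_append, List.nil_append,
    List.getD_cons_succ, List.getD_cons_succ,
    ← psiW_eq_getD z (shiftW y 1) z hlen]

lemma psiImage_eq (z : A) {y t : ℕ → A} (h : PsiImage z y t) : t = psiW z y := by
  funext n
  have hlen : n < (psiL z (pref y (n + 1))).length :=
    lt_psiL_pref_length z _ (Nat.lt_succ_self n)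
  show t n = (psiL z (pref y (n + 1))).getD n (y 0)
  rw [h (n + 1), pref_getD t (y 0) hlen]

lemma pref_psiW (z : A) (y : ℕ → A) (n : ℕ) :
    psiL z (pref y n) = pref (psiW z y) (psiL z (pref y n)).length := by
  apply List.ext_getElem (by simp)
  intro j h1 h2
  rw [pref_getElem _ h2, psiW_eq_getD z y (y 0) h1, List.getD_eq_getElem _ _ h1]

lemma shiftW_zero (w : ℕ → A) : shiftW w 0 = w := by
  funext n; simp [shiftW]

lemma shiftW_shiftW (w : ℕ → A) (i j : ℕ) : shiftW (shiftW w i) j = shiftW w (i + j) := by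
  funext n; simp [shiftW, Nat.add_assoc]

lemma shiftW_one_apply (w : ℕ → A) (n : ℕ) : shiftW w 1 n = w (n + 1) := by
  simp [shiftW, Nat.add_comm]

lemma shiftW_consW (c : A) (u : ℕ → A) : shiftW (consW c u) 1 = u := by
  funext n
  show consW c u (1 + n) = u n
  rw [Nat.add_comm]
  rfl

lemma psiW_consW_eq (z : A) (u : ℕ → A) : psiW z (consW z u) = consW z (psiW z u) := by
  funext n
  match n with
  | 0 => rw [psiW_zero]; rfl
  | n + 1 =>
    rw [psiW_succ_of_eq z (rfl : (consW z u) 0 = z), shiftW_consW]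
    rfl

lemma psiW_consW_ne (z c : A) (hc : c ≠ z) (u : ℕ → A) :
    psiW z (consW c u) = consW z (consW c (psiW z u)) := by
  funext n
  match n with
  | 0 => rw [psiW_zero]; rfl
  | 1 => rw [psiW_one_of_ne z (hc : (consW c u) 0 ≠ z)]; rfl
  | n + 2 =>
    rw [psiW_two_of_ne z (hc : (consW c u) 0 ≠ z), shiftW_consW]
    rfl

lemma shiftW_psiW_one (z : A) (y : ℕ → A) :
    shiftW (psiW z y) 1 = if y 0 = z then psiW z (shiftW y 1)
      else consW (y 0) (psiW z (shiftW y 1)) := by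
  by_cases h : y 0 = z
  · rw [if_pos h]
    funext n
    rw [shiftW_one_apply, psiW_succ_of_eq z h]
  · rw [if_neg h]
    funext n
    rw [shiftW_one_apply]
    cases n with
    | zero => rw [psiW_one_of_ne z h]; rfl
    | succ m => rw [psiW_two_of_ne z h]; rfl

lemma shift_psiW_struct (z : A) (y : ℕ → A) (i : ℕ) :
    ∃ j, shiftW (psiW z y) i = psiW z (shiftW y j) ∨
      (y j ≠ z ∧ shiftW (psiW z y) i = consW (y j) (psiW z (shiftW y (j + 1)))) := by
  induction i with
  | zero => exact ⟨0, Or.inl (by rw [shiftW_zero, shiftW_zero])⟩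
  | succ i ih =>
    obtain ⟨j, hj | ⟨hne, hj⟩⟩ := ih
    · have e : shiftW (psiW z y) (i + 1) = shiftW (psiW z (shiftW y j)) 1 := by
        rw [← hj, shiftW_shiftW]
      rw [shiftW_psiW_one, shiftW_shiftW] at e
      by_cases h : shiftW y j 0 = z
      · rw [if_pos h] at e
        exact ⟨j + 1, Or.inl e⟩
      · rw [if_neg h] at e
        exact ⟨j, Or.inr ⟨h, e⟩⟩
    · refine ⟨j + 1, Or.inl ?_⟩
      rw [← shiftW_shiftW, hj, shiftW_consW]

section Order
variable [LinearOrder A]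

def leW (x y : ℕ → A) : Prop := ∀ n, (∀ j < n, x j = y j) → x n ≤ y n

lemma leW_of_head_lt {x y : ℕ → A} (h : x 0 < y 0) : leW x y := by
  intro n hn
  match n with
  | 0 => exact h.le
  | n + 1 => exact absurd (hn 0 (Nat.succ_pos n)) h.ne

lemma leW_tail {x y : ℕ → A} (h : leW x y) (h0 : x 0 = y 0) :
    leW (shiftW x 1) (shiftW y 1) := by
  intro n hn
  have agree : ∀ j < n + 1, x j = y j := by
    intro j hj
    match j with
    | 0 => exact h0
    | m + 1 =>
      have := hn m (by omega)
      rwa [shiftW_one_apply, shiftW_one_apply] at this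
  have := h (n + 1) agree
  rwa [shiftW_one_apply, shiftW_one_apply]

lemma leW_cons {c d : A} {u v : ℕ → A} (hcd : c ≤ d) (h : c = d → leW u v) :
    leW (consW c u) (consW d v) := by
  intro n hn
  match n with
  | 0 => exact hcd
  | n + 1 =>
    have h0 : c = d := hn 0 (Nat.succ_pos n)
    refine h h0 n ?_
    intro j hj
    exact hn (j + 1) (by omega)

lemma psiW_mono_aux (z : A) : ∀ n : ℕ, ∀ x y : ℕ → A, leW x y →
    (∀ j < n, psiW z x j = psiW z y j) → psiW z x n ≤ psiW z y n := by
  intro n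
  induction n using Nat.strong_induction_on with
  | _ n ih =>
    intro x y h hn
    match n with
    | 0 => rw [psiW_zero, psiW_zero]
    | n + 1 =>
      have h0 : x 0 ≤ y 0 := h 0 (fun j hj => absurd hj (Nat.not_lt_zero j))
      rcases lt_or_eq_of_le h0 with hlt | heq
      · match n with
        | 0 =>
          by_cases hx : x 0 = z <;> by_cases hy : y 0 = z
          · rw [psiW_succ_of_eq z hx, psiW_succ_of_eq z hy, psiW_zero, psiW_zero]
          · rw [psiW_succ_of_eq z hx, psiW_zero, psiW_one_of_ne z hy]
            exact le_of_lt (hx ▸ hlt)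
          · rw [psiW_one_of_ne z hx, psiW_succ_of_eq z hy, psiW_zero]
            exact le_of_lt (hy ▸ hlt)
          · rw [psiW_one_of_ne z hx, psiW_one_of_ne z hy]; exact hlt.le
        | m + 1 =>
          exfalso
          have h1 : psiW z x 1 = psiW z y 1 := hn 1 (by omega)
          by_cases hx : x 0 = z <;> by_cases hy : y 0 = z
          · exact hlt.ne (hx.trans hy.symm)
          · rw [psiW_succ_of_eq z hx, psiW_zero, psiW_one_of_ne z hy] at h1
            exact hy h1.symm
          · rw [psiW_one_of_ne z hx, psiW_succ_of_eq z hy, psiW_zero] at h1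
            exact hx h1
          · rw [psiW_one_of_ne z hx, psiW_one_of_ne z hy] at h1
            exact hlt.ne h1
      · have htail : leW (shiftW x 1) (shiftW y 1) := leW_tail h heq
        by_cases hz : x 0 = z
        · have hyz : y 0 = z := heq ▸ hz
          rw [psiW_succ_of_eq z hz, psiW_succ_of_eq z hyz]
          refine ih n (by omega) _ _ htail ?_
          intro j hj
          have := hn (j + 1) (by omega)
          rwa [psiW_succ_of_eq z hz, psiW_succ_of_eq z hyz] at this
        · have hyz : y 0 ≠ z := heq ▸ hz
          match n with
          | 0 =>
            rw [psiW_one_of_ne z hz, psiW_one_of_ne z hyz]; exact heq.le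
          | m + 1 =>
            rw [psiW_two_of_ne z hz, psiW_two_of_ne z hyz]
            refine ih m (by omega) _ _ htail ?_
            intro j hj
            have := hn (j + 2) (by omega)
            rwa [psiW_two_of_ne z hz, psiW_two_of_ne z hyz] at this

lemma psiW_mono (z : A) {x y : ℕ → A} (h : leW x y) : leW (psiW z x) (psiW z y) :=
  fun n hn => psiW_mono_aux z n x y h hn

end Order

section Bridge
variable [DecidableEq A] [LinearOrder A]

lemma lex_cons_cases {r : A → A → Prop} {a b : A} {l1 l2 : List A}
    (h : List.Lex r (a :: l1) (b :: l2)) : r a b ∨ (a = b ∧ List.Lex r l1 l2) := by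
  cases h with
  | cons h => exact Or.inr ⟨rfl, h⟩
  | rel h => exact Or.inl h

lemma lex_pref_iff {x y : ℕ → A} {k : ℕ} :
    List.Lex (· < ·) (pref x k) (pref y k) ↔
      ∃ n < k, (∀ j < n, x j = y j) ∧ x n < y n := by
  induction k generalizing x y with
  | zero =>
    simp only [pref, List.range_zero, List.map_nil]
    constructor
    · intro h; cases h
    · rintro ⟨n, hn, -⟩; omega
  | succ k ih =>
    rw [pref_succ, pref_succ]
    constructor
    · intro h
      rcases lex_cons_cases h with hr | ⟨h0, htail⟩
      · exact ⟨0, by omega, fun j hj => absurd hj (by omega), hr⟩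
      · obtain ⟨n, hn, hagree, hlt⟩ := ih.mp htail
        refine ⟨n + 1, by omega, ?_, ?_⟩
        · intro j hj
          match j with
          | 0 => exact h0
          | m + 1 =>
            have := hagree m (by omega)
            rwa [shiftW_one_apply, shiftW_one_apply] at this
        · have := hlt
          rwa [shiftW_one_apply, shiftW_one_apply] at this
    · rintro ⟨n, hn, hagree, hlt⟩
      match n with
      | 0 => exact List.Lex.rel hlt
      | m + 1 =>
        have h0 : x 0 = y 0 := hagree 0 (by omega)
        rw [h0]
        refine List.Lex.cons (ih.mpr ⟨m, by omega, ?_, ?_⟩)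
        · intro j hj
          rw [shiftW_one_apply, shiftW_one_apply]
          exact hagree (j + 1) (by omega)
        · rw [shiftW_one_apply, shiftW_one_apply]
          exact hlt
end Bridge

section Main
variable [DecidableEq A] [LinearOrder A]

lemma leW_pref {x y : ℕ → A} (h : leW x y) (k : ℕ) :
    pref x k = pref y k ∨ List.Lex (· < ·) (pref x k) (pref y k) := by
  classical
  by_cases hall : ∀ j < k, x j = y j
  · exact Or.inl (pref_eq_iff.mpr hall)
  · push_neg at hall
    have hex : ∃ n, n < k ∧ x n ≠ y n := by
      obtain ⟨n, hn1, hn2⟩ := hall; exact ⟨n, hn1, hn2⟩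
    have hn0 := Nat.find_spec hex
    have hagree : ∀ j < Nat.find hex, x j = y j := by
      intro j hj
      by_contra hne
      exact Nat.find_min hex hj ⟨lt_trans hj hn0.1, hne⟩
    have hlt : x (Nat.find hex) < y (Nat.find hex) :=
      lt_of_le_of_ne (h (Nat.find hex) hagree) hn0.2
    exact Or.inr (lex_pref_iff.mpr ⟨Nat.find hex, hn0.1, hagree, hlt⟩)

lemma leW_of_forall_lex {x y : ℕ → A}
    (h : ∀ k, pref x k = pref y k ∨ List.Lex (· < ·) (pref x k) (pref y k)) :
    leW x y := by
  intro n hagree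
  rcases h (n + 1) with he | hl
  · exact (pref_eq_iff.mp he n (by omega)).le
  · obtain ⟨n', hn', hagree', hlt⟩ := lex_pref_iff.mp hl
    rcases lt_trichotomy n' n with hc | hc | hc
    · exact absurd (hagree n' hc) hlt.ne
    · exact hc ▸ hlt.le
    · omega

lemma isMinWord_leW {w m : ℕ → A} (h : IsMinWord (· < ·) w m) (i : ℕ) :
    leW m (shiftW w i) := by
  apply leW_of_forall_lex
  intro k
  have hf : IsFactor w (pref (shiftW w i) k) := by
    refine ⟨i, ?_⟩
    simp only [pref_length]
    rfl
  exact (h k).2.2 _ hf (pref_length _ _)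

lemma isFactor_pref_of_agree {t m : ℕ → A} {k i : ℕ} (h : ∀ j < k, m j = t (i + j)) :
    IsFactor t (pref m k) := by
  refine ⟨i, ?_⟩
  simp only [pref_length]
  exact pref_eq_iff.mpr h

lemma psiL_factor (z : A) {t1 t : ℕ → A} (ht : PsiImage z t1 t) {u : List A}
    (hu : IsFactor t1 u) :
    ∃ i, ∀ j < (psiL z u).length, (psiL z u).getD j (t 0) = t (i + j) := by
  obtain ⟨i, hi⟩ := hu
  have hu' : pref t1 (i + u.length) = pref t1 i ++ u := by
    rw [pref_add]
    congr 1
    exact hi.symm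
  have h2 := ht (i + u.length)
  rw [hu', psiL_append, List.length_append] at h2
  refine ⟨(psiL z (pref t1 i)).length, ?_⟩
  intro j hj
  have hjlen : (psiL z (pref t1 i)).length + j <
      (psiL z (pref t1 i)).length + (psiL z u).length := by omega
  have := pref_getD t (t 0) hjlen
  rw [← h2] at this
  rw [← this, List.getD_eq_getElem _ _ hj,
    List.getD_eq_getElem _ _ (by rw [List.length_append]; omega),
    List.getElem_append_right (by omega)]
  congr 1
  omega

lemma build {t m : ℕ → A} (hfac : ∀ k, IsFactor t (pref m k))
    (hle : ∀ i, leW m (shiftW t i)) : IsMinWord (· < ·) t m := by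
  intro k
  refine ⟨hfac k, pref_length _ _, ?_⟩
  intro v hv hvk
  obtain ⟨i, hi⟩ := hv
  subst hvk
  have hv' : v = pref (shiftW t i) v.length := hi
  rcases leW_pref (hle i) v.length with he | hl
  · exact Or.inl (he.trans hv'.symm)
  · refine Or.inr ?_
    convert hl using 2

lemma psiW_agree (z : A) {t1 t : ℕ → A} (ht : PsiImage z t1 t) {M : ℕ → A}
    (hfac : ∀ k, IsFactor t1 (pref M k)) (k : ℕ) :
    ∃ i, ∀ j < k, psiW z M j = t (i + j) := by
  obtain ⟨i, hi⟩ := psiL_factor z ht (hfac k)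
  have hk : k ≤ (psiL z (pref M k)).length := by
    simpa using le_psiL_length z (pref M k)
  refine ⟨i, fun j hj => ?_⟩
  rw [psiW_eq_getD z M (t 0) (lt_of_lt_of_le hj hk)]
  exact hi j (lt_of_lt_of_le hj hk)

end Main

end Stmt6Aux


open Stmt6Aux in
/-- Remark: with `t = Ψ_z(t¹)`, `s = Ψ_z(s¹)` and `a` minimal among the letters other
than possibly `z`: `min(t¹) = a·s¹` implies `min(t) = z·a·s` if `z < a`,
and `min(t) = a·s` if `z ≥ a`. -/
theorem stmt_6 {A : Type*} [LinearOrder A] (z a : A) (ha : ∀ b : A, b ≠ z → a ≤ b)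
    (t t1 s s1 : ℕ → A) (ht : PsiImage z t1 t) (hs : PsiImage z s1 s)
    (hmin : IsMinWord (· < ·) t1 (consW a s1)) :
    (z < a → IsMinWord (· < ·) t (consW z (consW a s))) ∧
    (a ≤ z → IsMinWord (· < ·) t (consW a s)) := by
  classical
  have ht' : t = psiW z t1 := psiImage_eq z ht
  have hs' : s = psiW z s1 := psiImage_eq z hs
  have hfacM : ∀ k, IsFactor t1 (pref (consW a s1) k) := fun k => (hmin k).1
  have hle1 : ∀ j, leW (consW a s1) (shiftW t1 j) := isMinWord_leW hmin
  constructor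
  · -- z < a
    intro hza
    have hm : consW z (consW a s) = psiW z (consW a s1) := by
      rw [hs']
      exact (psiW_consW_ne z a hza.ne' s1).symm
    apply build
    · intro k
      obtain ⟨i, hi⟩ := psiW_agree z ht hfacM k
      exact isFactor_pref_of_agree (fun j hj => by rw [hm]; exact hi j hj)
    · intro i
      rw [ht']
      obtain ⟨j, hj | ⟨hne, hj⟩⟩ := shift_psiW_struct z t1 i
      · rw [hj, hm]
        exact psiW_mono z (hle1 j)
      · rw [hj]
        apply leW_of_head_lt
        show z < t1 j
        exact lt_of_lt_of_le hza (ha _ hne)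
  · -- a ≤ z
    intro haz
    -- factors
    have hfac : ∀ k, IsFactor t (pref (consW a s) k) := by
      intro k
      rcases eq_or_lt_of_le haz with heq | hlt
      · -- a = z
        have hm : consW a s = psiW z (consW a s1) := by
          rw [hs', heq]
          exact (psiW_consW_eq z s1).symm
        obtain ⟨i, hi⟩ := psiW_agree z ht hfacM k
        exact isFactor_pref_of_agree (fun j hj => by rw [hm]; exact hi j hj)
      · -- a < z
        obtain ⟨i, hi⟩ := psiW_agree z ht hfacM (k + 1)
        refine isFactor_pref_of_agree (i := i + 1) (fun j hj => ?_)
        have h1 := hi (j + 1) (by omega)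
        rw [psiW_consW_ne z a (ne_of_lt hlt) s1] at h1
        rw [hs', show (i + 1) + j = i + (j + 1) by omega]
        exact h1
    apply build hfac
    intro i
    rw [ht']
    obtain ⟨j, hj | ⟨hne, hj⟩⟩ := shift_psiW_struct z t1 i
    · rcases eq_or_lt_of_le haz with heq | hlt
      · have hm : consW a s = psiW z (consW a s1) := by
          rw [hs', heq]
          exact (psiW_consW_eq z s1).symm
        rw [hj, hm]
        exact psiW_mono z (hle1 j)
      · rw [hj]
        apply leW_of_head_lt
        rw [psiW_zero]
        exact hlt
    · rw [hj]
      refine leW_cons (ha _ hne) (fun heq => ?_)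
      rw [hs']
      have h0 : consW a s1 0 = shiftW t1 j 0 := heq
      have h1 := leW_tail (hle1 j) h0
      rw [shiftW_consW, shiftW_shiftW] at h1
      exact psiW_mono z h1
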